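/- Let G be a connected finite simple graph and let A be an edge subset of minimum cardinality among those satisfying y_G(A) = y_G. Then for any k ≥ 2 distinct connected components F_1, F_2, …, F_k of G − A, the set E(F_1, …, F_k) of edges of G joining vertices lying in two distinct components among F_1, …, F_k satisfies |E(F_1, …, F_k)| ≤ 2k − 3; in particular, |E(F_i, F_j)| ≤ 1 for all 1 ≤ i < j ≤ k. -/

import Mathlib

/-!
Let `X` be the set of edges of `G` joining distinct components among `F₁, …, F_k`; all of them lie
in `A`. Putting the edges of `X` back merges `F₁, …, F_k` into at least one component and changes
no other component, so `B = A \ X` satisfies `c(G - B) ≥ c(G - A) - k + 1`, hence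
`y_G(B) ≥ y_G(A) + |X| - 2k + 2`. If `|X| ≥ 2k - 2` then `B` attains `y_G` with fewer edges than
`A`, contradicting minimality.
-/

open SimpleGraph

/-- The number of connected components of a graph. -/
noncomputable def numComp {V : Type*} (G : SimpleGraph V) : ℕ :=
  Nat.card G.ConnectedComponent

/-- `y_G(A) = 2 c(G - A) - |A| - 1`. -/
noncomputable def yVal {V : Type*} (G : SimpleGraph V) (A : Set (Sym2 V)) : ℤ :=
  2 * (numComp (G.deleteEdges A) : ℤ) - (A.ncard : ℤ) - 1

/-- `y_G = max_{A ⊆ E(G)} y_G(A)`. -/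
noncomputable def yMax {V : Type*} (G : SimpleGraph V) : ℤ :=
  sSup { y : ℤ | ∃ A ⊆ G.edgeSet, yVal G A = y }

namespace SimpleGraph

variable {V : Type*}

section Merge

variable {H H' : SimpleGraph V} {S : Set H.ConnectedComponent}

theorem Reachable.reachable_or_mem_of_adj_or_mem
    (hadj : ∀ u v, H'.Adj u v → H.Adj u v ∨
      (H.connectedComponentMk u ∈ S ∧ H.connectedComponentMk v ∈ S))
    {u v : V} (h : H'.Reachable u v) :
    H.Reachable u v ∨ (H.connectedComponentMk u ∈ S ∧ H.connectedComponentMk v ∈ S) := by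
  obtain ⟨p⟩ := h
  induction p with
  | nil => exact Or.inl .rfl
  | @cons a b c hab _ ih =>
    rcases hadj a b hab, ih with ⟨hH | ⟨ha, hb⟩, hr | ⟨hb, hc⟩⟩
    · exact Or.inl (hH.reachable.trans hr)
    · exact Or.inr ⟨(ConnectedComponent.sound hH.reachable).symm ▸ hb, hc⟩
    · exact Or.inr ⟨ha, (ConnectedComponent.sound hr).symm ▸ hb⟩
    · exact Or.inr ⟨ha, hc⟩

theorem injOn_map_insert_compl (hle : H ≤ H')
    (hadj : ∀ u v, H'.Adj u v → H.Adj u v ∨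
      (H.connectedComponentMk u ∈ S ∧ H.connectedComponentMk v ∈ S))
    {C₀ : H.ConnectedComponent} :
    Set.InjOn (ConnectedComponent.map (Hom.ofLE hle)) (insert C₀ Sᶜ) := by
  intro C hC D hD hCD
  induction C using ConnectedComponent.ind with | h u => ?_
  induction D using ConnectedComponent.ind with | h v => ?_
  rcases (ConnectedComponent.exact hCD).reachable_or_mem_of_adj_or_mem hadj with hr | ⟨hu, hv⟩
  · exact ConnectedComponent.sound hr
  · exact (hC.resolve_right (· hu)).trans (hD.resolve_right (· hv)).symm

theorem card_connectedComponent_add_one_le [Finite V] (hle : H ≤ H')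
    (hadj : ∀ u v, H'.Adj u v → H.Adj u v ∨
      (H.connectedComponentMk u ∈ S ∧ H.connectedComponentMk v ∈ S))
    (hne : S.Nonempty) :
    Nat.card H.ConnectedComponent + 1 ≤ Nat.card H'.ConnectedComponent + S.ncard := by
  obtain ⟨C₀, hC₀⟩ := hne
  have hT : (insert C₀ Sᶜ).ncard = Sᶜ.ncard + 1 :=
    Set.ncard_insert_of_notMem (by simpa using hC₀)
  have hmap : (insert C₀ Sᶜ).ncard ≤ Nat.card H'.ConnectedComponent :=
    (Set.ncard_le_ncard_of_injOn _ (fun _ _ => Set.mem_univ _)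
      (injOn_map_insert_compl hle hadj)).trans_eq (Set.ncard_univ _)
  have hsplit := Set.ncard_add_ncard_compl S
  omega

end Merge

def crossEdges (G H : SimpleGraph V) (S : Set H.ConnectedComponent) : Set (Sym2 V) :=
  {e | ∃ u v, G.Adj u v ∧ e = s(u, v) ∧ H.connectedComponentMk u ∈ S ∧
    H.connectedComponentMk v ∈ S ∧ H.connectedComponentMk u ≠ H.connectedComponentMk v}

variable {G H : SimpleGraph V} {S : Set H.ConnectedComponent}

theorem mk_mem_crossEdges {C D : H.ConnectedComponent} (hC : C ∈ S) (hD : D ∈ S) (hCD : C ≠ D)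
    {u v : V} (hu : u ∈ C.supp) (hv : v ∈ D.supp) (hadj : G.Adj u v) :
    s(u, v) ∈ crossEdges G H S := by
  rw [ConnectedComponent.mem_supp_iff] at hu hv
  subst hu hv
  exact ⟨u, v, hadj, rfl, hC, hD, hCD⟩

theorem crossEdges_deleteEdges_subset (A : Set (Sym2 V))
    (S : Set (G.deleteEdges A).ConnectedComponent) : crossEdges G (G.deleteEdges A) S ⊆ A := by
  rintro _ ⟨u, v, hadj, rfl, -, -, hne⟩
  by_contra he
  exact hne (ConnectedComponent.sound ((deleteEdges_adj ..).2 ⟨hadj, he⟩).reachable)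

theorem deleteEdges_sdiff_crossEdges_adj {A : Set (Sym2 V)}
    {S : Set (G.deleteEdges A).ConnectedComponent} {u v : V}
    (h : (G.deleteEdges (A \ crossEdges G (G.deleteEdges A) S)).Adj u v) :
    (G.deleteEdges A).Adj u v ∨ ((G.deleteEdges A).connectedComponentMk u ∈ S ∧
      (G.deleteEdges A).connectedComponentMk v ∈ S) := by
  obtain ⟨hadj, hnot⟩ := (deleteEdges_adj ..).1 h
  by_cases hA : s(u, v) ∈ A
  · obtain ⟨u', v', -, heq, hu', hv', -⟩ := not_not.1 fun hX => hnot ⟨hA, hX⟩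
    rcases Sym2.eq_iff.1 heq with ⟨rfl, rfl⟩ | ⟨rfl, rfl⟩
    · exact Or.inr ⟨hu', hv'⟩
    · exact Or.inr ⟨hv', hu'⟩
  · exact Or.inl ((deleteEdges_adj ..).2 ⟨hadj, hA⟩)

end SimpleGraph

section yVal

variable {V : Type*} [Finite V] {G : SimpleGraph V}

theorem yVal_le_yMax {B : Set (Sym2 V)} (hB : B ⊆ G.edgeSet) : yVal G B ≤ yMax G :=
  le_csSup ((Set.finite_range (yVal G)).subset (by rintro _ ⟨C, -, rfl⟩; exact ⟨C, rfl⟩)).bddAbove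
    ⟨B, hB, rfl⟩

theorem yVal_le_yVal_sdiff_crossEdges {A : Set (Sym2 V)}
    {S : Set (G.deleteEdges A).ConnectedComponent} (hS : S.Nonempty)
    (hcard : 2 * S.ncard ≤ (crossEdges G (G.deleteEdges A) S).ncard + 2) :
    yVal G A ≤ yVal G (A \ crossEdges G (G.deleteEdges A) S) := by
  have hmerge := card_connectedComponent_add_one_le
    (deleteEdges_anti Set.sdiff_subset) (fun _ _ => deleteEdges_sdiff_crossEdges_adj) hS
  have hsplit := Set.ncard_sdiff_add_ncard_of_subset (crossEdges_deleteEdges_subset A S)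
  unfold yVal numComp
  omega

theorem crossEdges_ncard_le_of_minimal {A : Set (Sym2 V)} (hA : A ⊆ G.edgeSet)
    (hy : yMax G = yVal G A) (hmin : ∀ B ⊆ G.edgeSet, yMax G = yVal G B → A.ncard ≤ B.ncard)
    (S : Set (G.deleteEdges A).ConnectedComponent) :
    (crossEdges G (G.deleteEdges A) S).ncard ≤ 2 * S.ncard - 3 := by
  by_contra! hlt
  have hne : (crossEdges G (G.deleteEdges A) S).Nonempty :=
    Set.nonempty_of_ncard_ne_zero (by omega)
  have hS : S.Nonempty := by
    obtain ⟨_, u, -, -, -, hu, -⟩ := hne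
    exact ⟨_, hu⟩
  have hB : A \ crossEdges G (G.deleteEdges A) S ⊆ G.edgeSet := Set.sdiff_subset.trans hA
  have hattain := (yVal_le_yMax hB).antisymm' (hy ▸ yVal_le_yVal_sdiff_crossEdges hS (by omega))
  have hsplit := Set.ncard_sdiff_add_ncard_of_subset (crossEdges_deleteEdges_subset A S)
  have := (Set.ncard_pos (Set.toFinite _)).2 hne
  have := hmin _ hB hattain
  omega

end yVal

theorem crossEdges_card_le_of_minimal_yMax_attained_general {V : Type*} [Finite V]
    (G : SimpleGraph V)
    (A : Set (Sym2 V)) (hA : A ⊆ G.edgeSet) (hy : yMax G = yVal G A)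
    (hmin : ∀ B ⊆ G.edgeSet, yMax G = yVal G B → A.ncard ≤ B.ncard)
    (k : ℕ)
    (F : Fin k → (G.deleteEdges A).ConnectedComponent) (hF : Function.Injective F) :
    ({e : Sym2 V | ∃ i j : Fin k, i ≠ j ∧
        ∃ u ∈ (F i).supp, ∃ v ∈ (F j).supp, G.Adj u v ∧ e = s(u, v)}.ncard ≤ 2 * k - 3) ∧
    ∀ i j : Fin k, i ≠ j →
      ({e : Sym2 V | ∃ u ∈ (F i).supp, ∃ v ∈ (F j).supp,
          G.Adj u v ∧ e = s(u, v)}.ncard ≤ 1) := by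
  have hcross := crossEdges_ncard_le_of_minimal hA hy hmin
  refine ⟨?_, fun i j hij => ?_⟩
  · calc _ ≤ (crossEdges G _ (Set.range F)).ncard := Set.ncard_le_ncard ?_
      _ ≤ 2 * (Set.range F).ncard - 3 := hcross _
      _ = 2 * k - 3 := by rw [Set.ncard_range_of_injective hF, Nat.card_fin]
    rintro _ ⟨i, j, hij, u, hu, v, hv, hadj, rfl⟩
    exact mk_mem_crossEdges (Set.mem_range_self i) (Set.mem_range_self j) (hF.ne hij) hu hv hadj
  · calc _ ≤ (crossEdges G _ {F i, F j}).ncard := Set.ncard_le_ncard ?_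
      _ ≤ 2 * ({F i, F j} : Set _).ncard - 3 := hcross _
      _ = 1 := by rw [Set.ncard_pair (hF.ne hij)]
    rintro _ ⟨u, hu, v, hv, hadj, rfl⟩
    exact mk_mem_crossEdges (by simp) (by simp) (hF.ne hij) hu hv hadj

/-- If `A` is an edge subset of minimum cardinality attaining `y_G`, then for any `k ≥ 2`
distinct components `F₁, …, F_k` of `G - A`, `|E(F₁, …, F_k)| ≤ 2k - 3`;
in particular `|E(F_i, F_j)| ≤ 1` for `i ≠ j`. -/
theorem crossEdges_card_le_of_minimal_yMax_attained {V : Type*} [Finite V]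
    (G : SimpleGraph V) (hG : G.Connected)
    (A : Set (Sym2 V)) (hA : A ⊆ G.edgeSet) (hy : yMax G = yVal G A)
    (hmin : ∀ B ⊆ G.edgeSet, yMax G = yVal G B → A.ncard ≤ B.ncard)
    (k : ℕ) (hk : 2 ≤ k)
    (F : Fin k → (G.deleteEdges A).ConnectedComponent) (hF : Function.Injective F) :
    ({e : Sym2 V | ∃ i j : Fin k, i ≠ j ∧
        ∃ u ∈ (F i).supp, ∃ v ∈ (F j).supp, G.Adj u v ∧ e = s(u, v)}.ncard ≤ 2 * k - 3) ∧
    ∀ i j : Fin k, i ≠ j →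
      ({e : Sym2 V | ∃ u ∈ (F i).supp, ∃ v ∈ (F j).supp,
          G.Adj u v ∧ e = s(u, v)}.ncard ≤ 1) :=
  crossEdges_card_le_of_minimal_yMax_attained_general G A hA hy hmin k F hF
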